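/- arXiv:1404.5177 — 2 statements merged into one kernel-verified Lean document; each statement's English description precedes it below -/
import Mathlib

section
/- Let R = k[x_1,…,x_n] (char k = 0) and f_3,…,f_n ∈ R. The Jacobian bracket {f,g} = J(f,g,f_3,…,f_n), where J denotes the Jacobian determinant det(∂f_i/∂x_j) of the n functions (f,g,f_3,…,f_n), defines a Poisson structure whose modular derivation φ(f) = Σ_j ∂{f,x_j}/∂x_j is identically zero; i.e. every Jacobian Poisson structure on a polynomial algebra is unimodular. -/
/-!
Write `{f, g} = ∑ⱼ {f, xⱼ} ∂ⱼ g`: the components `{f, xⱼ}` of the Hamiltonian vector field of `f`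
form a column of the adjugate of a Jacobian matrix. Such a column is divergence free (Piola's
identity: the second derivatives `∂ⱼ∂ₗ uₐ` are symmetric in `j, l` while the cofactors they meet
alternate), which is unimodularity.

For any vector field `w`, the Lie derivative of `du₁ ∧ ⋯ ∧ duₙ` gives
`∑ᵢ J(u₁, …, w uᵢ, …, uₙ) = w J(u) + J(u) div w`. Taking `w = {f, ·}` (so `div w = 0`) and
`u = (g, e, f₃, …, fₙ)`, the terms `i ≥ 3` vanish because `{f, fᵢ} = 0`, leaving
`{f, {g, e}} = {{f, g}, e} + {g, {f, e}}`, which with antisymmetry is the Jacobi identity.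
-/

open MvPolynomial

/-- The Jacobian bracket {f,g} = J(f,g,f_3,…,f_n): determinant of the Jacobian
matrix whose rows are the gradients of f, g, f_3, …, f_n (the latter given by
`hs i` for indices i ≥ 2). -/
noncomputable def jacobianBracket {k : Type*} [Field k] (n : ℕ)
    (hs : Fin n → MvPolynomial (Fin n) k)
    (f g : MvPolynomial (Fin n) k) : MvPolynomial (Fin n) k :=
  Matrix.det (Matrix.of fun i j : Fin n =>
    if (i : ℕ) = 0 then pderiv j f
    else if (i : ℕ) = 1 then pderiv j g
    else pderiv j (hs i))

open Function

theorem Derivation.map_prod {ι R A M : Type*} [CommSemiring R] [CommSemiring A] [AddCommMonoid M]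
    [Algebra R A] [Module A M] [Module R M] [DecidableEq ι] (D : Derivation R A M)
    (s : Finset ι) (f : ι → A) :
    D (∏ i ∈ s, f i) = ∑ i ∈ s, (∏ j ∈ s.erase i, f j) • D (f i) := by
  induction s using Finset.induction_on with
  | empty => simp
  | insert a s ha ih =>
    rw [Finset.prod_insert ha, D.leibniz, ih, Finset.sum_insert ha, Finset.erase_insert ha,
      Finset.smul_sum, add_comm]
    congr 1
    refine Finset.sum_congr rfl fun i hi => ?_
    rw [Finset.erase_insert_of_ne (ne_of_mem_of_not_mem hi ha).symm,
      Finset.prod_insert fun h => ha (Finset.mem_of_mem_erase h), mul_smul]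

theorem Derivation.map_det {R A n : Type*} [CommRing R] [CommRing A] [Algebra R A]
    [Fintype n] [DecidableEq n] (D : Derivation R A A) (M : Matrix n n A) :
    D M.det = ∑ i, (M.updateRow i fun j => D (M i j)).det := by
  simp only [← M.det_transpose, ← Matrix.det_transpose (M.updateRow _ _), Matrix.det_apply,
    Matrix.transpose_apply, Finset.sum_comm (γ := n), map_sum]
  refine Finset.sum_congr rfl fun σ _ => ?_
  rw [Units.smul_def, map_zsmul, D.map_prod, Finset.smul_sum]
  refine Finset.sum_congr rfl fun i _ => ?_
  have hrow : ∏ l, (M.updateRow i fun j => D (M i j)) l (σ l)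
      = D (M i (σ i)) * ∏ l ∈ Finset.univ.erase i, M l (σ l) := by
    rw [← Finset.mul_prod_erase _ _ (Finset.mem_univ i), Matrix.updateRow_self]
    congr 1
    exact Finset.prod_congr rfl fun l hl => by rw [Matrix.updateRow_ne (Finset.ne_of_mem_erase hl)]
  rw [hrow, smul_eq_mul, mul_comm, Units.smul_def]

theorem Matrix.det_updateRow_eq_sum_mul_adjugate {A n : Type*} [CommRing A] [Fintype n]
    [DecidableEq n] (M : Matrix n n A) (i : n) (v : n → A) :
    (M.updateRow i v).det = ∑ j, v j * M.adjugate j i := by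
  rw [← cramer_transpose_apply, cramer_eq_adjugate_mulVec, ← adjugate_transpose, mulVec,
    dotProduct]
  simp [mul_comm]

theorem Derivation.map_det_eq_sum_mul_adjugate {R A n : Type*} [CommRing R] [CommRing A]
    [Algebra R A] [Fintype n] [DecidableEq n] (D : Derivation R A A) (M : Matrix n n A) :
    D M.det = ∑ i, ∑ j, D (M i j) * M.adjugate j i := by
  simp only [D.map_det, Matrix.det_updateRow_eq_sum_mul_adjugate]

theorem Matrix.det_updateRow_updateRow_swap {A n : Type*} [CommRing A] [Fintype n]
    [DecidableEq n] (M : Matrix n n A) {i i' : n} (h : i ≠ i') (v w : n → A) :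
    ((M.updateRow i v).updateRow i' w).det = -((M.updateRow i w).updateRow i' v).det := by
  rw [← neg_one_mul, show (-1 : A) = (Equiv.Perm.sign (Equiv.swap i i') : ℤ) by
    simp [Equiv.Perm.sign_swap h], ← det_permute]
  congr 1
  ext r c
  simp only [submatrix_apply, updateRow_apply, Equiv.swap_apply_def, id]
  split_ifs <;> simp_all

theorem Finset.sum_sum_mul_eq_zero_of_symm_of_alternating {ι A : Type*} [Fintype ι]
    [CommRing A] (c d : ι → ι → A) (hc : ∀ j l, c j l = c l j) (hd : ∀ j l, d j l = -d l j)
    (hd₀ : ∀ j, d j j = 0) : ∑ j, ∑ l, c j l * d j l = 0 := by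
  rw [← Fintype.sum_prod_type']
  refine Finset.sum_ninvolution Prod.swap (fun x => ?_) (fun x hx => ?_) (fun _ => mem_univ _)
    Prod.swap_swap
  · rw [Prod.fst_swap, Prod.snd_swap, hc, hd x.2, mul_neg, add_neg_cancel]
  · rintro h
    exact hx (by rw [show x.1 = x.2 from congrArg Prod.snd h, hd₀, mul_zero])

namespace MvPolynomial

variable {R σ : Type*} [CommRing R]

theorem pderiv_pderiv_comm (i j : σ) (f : MvPolynomial σ R) :
    pderiv i (pderiv j f) = pderiv j (pderiv i f) := by
  have h : ⁅pderiv (R := R) i, pderiv (R := R) j⁆ = 0 := by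
    classical
    refine derivation_ext fun l => ?_
    simp [Derivation.commutator_apply, pderiv_X, Pi.single_apply, apply_ite]
  rw [← sub_eq_zero, ← Derivation.commutator_apply, h, Derivation.zero_apply]

noncomputable def jacobianMatrix (u : σ → MvPolynomial σ R) : Matrix σ σ (MvPolynomial σ R) :=
  Matrix.of fun i j => pderiv j (u i)

variable [DecidableEq σ]

theorem jacobianMatrix_update (u : σ → MvPolynomial σ R) (i : σ) (h : MvPolynomial σ R) :
    jacobianMatrix (update u i h) = (jacobianMatrix u).updateRow i fun j => pderiv j h := by
  ext a b
  rcases eq_or_ne a i with rfl | ha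
  · simp [jacobianMatrix]
  · simp [jacobianMatrix, ha]

variable [Fintype σ]

theorem det_jacobianMatrix_update (u : σ → MvPolynomial σ R) (i : σ) (h : MvPolynomial σ R) :
    (jacobianMatrix (update u i h)).det = ∑ j, pderiv j h * (jacobianMatrix u).adjugate j i := by
  rw [jacobianMatrix_update, Matrix.det_updateRow_eq_sum_mul_adjugate]

theorem sum_pderiv_adjugate_jacobianMatrix (u : σ → MvPolynomial σ R) (i : σ) :
    ∑ j, pderiv j ((jacobianMatrix u).adjugate j i) = 0 := by
  set J := jacobianMatrix u
  simp only [Matrix.adjugate_apply J, Derivation.map_det_eq_sum_mul_adjugate]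
  rw [Finset.sum_comm]
  refine Finset.sum_eq_zero fun a _ => ?_
  rcases eq_or_ne a i with rfl | ha
  · simp [Pi.single_apply, apply_ite]
  · have hrow : ∀ j b,
        pderiv j ((J.updateRow i (Pi.single j 1)) a b) = pderiv j (pderiv b (u a)) :=
      fun j b => by rw [Matrix.updateRow_ne ha]; rfl
    simp only [hrow, Matrix.adjugate_apply]
    refine Finset.sum_sum_mul_eq_zero_of_symm_of_alternating _ _
      (fun j b => pderiv_pderiv_comm j b _)
      (fun j b => Matrix.det_updateRow_updateRow_swap _ ha.symm _ _) fun j => ?_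
    refine Matrix.det_zero_of_row_eq ha.symm ?_
    rw [Matrix.updateRow_self, Matrix.updateRow_ne ha.symm, Matrix.updateRow_self]

theorem sum_det_jacobianMatrix_update_derivation (u w : σ → MvPolynomial σ R) :
    ∑ i, (jacobianMatrix (update u i (∑ j, w j * pderiv j (u i)))).det
      = ∑ j, w j * pderiv j (jacobianMatrix u).det
        + (jacobianMatrix u).det * ∑ j, pderiv j (w j) := by
  set J := jacobianMatrix u
  have hrow : ∀ i l, pderiv l (∑ j, w j * pderiv j (u i))
      = (J * jacobianMatrix w) i l + ∑ j, w j * pderiv j (J i l) := by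
    intro i l
    simp only [map_sum, pderiv_mul, Finset.sum_add_distrib, Matrix.mul_apply, J, jacobianMatrix,
      Matrix.of_apply, pderiv_pderiv_comm l, mul_comm (pderiv _ (w _))]
  have htrace : ∑ i, ∑ l, (J * jacobianMatrix w) i l * J.adjugate l i
      = J.det * ∑ j, pderiv j (w j) := by
    rw [show ∑ i, ∑ l, (J * jacobianMatrix w) i l * J.adjugate l i
        = (J * jacobianMatrix w * J.adjugate).trace from rfl, Matrix.trace_mul_cycle,
      Matrix.adjugate_mul, smul_mul_assoc, one_mul, Matrix.trace_smul, smul_eq_mul]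
    rfl
  have hjacobi : ∑ i, ∑ l, (∑ j, w j * pderiv j (J i l)) * J.adjugate l i
      = ∑ j, w j * pderiv j J.det := by
    simp only [Derivation.map_det_eq_sum_mul_adjugate, Finset.mul_sum, Finset.sum_mul, mul_assoc]
    exact Finset.sum_comm_cycle
  simp only [det_jacobianMatrix_update, hrow, add_mul, Finset.sum_add_distrib]
  rw [htrace, hjacobi, add_comm]

noncomputable def jacobianBracketAt (u : σ → MvPolynomial σ R) (p q : σ)
    (f g : MvPolynomial σ R) : MvPolynomial σ R :=
  (jacobianMatrix (update (update u p f) q g)).det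

variable {u : σ → MvPolynomial σ R} {p q : σ}

theorem jacobianBracketAt_X (f : MvPolynomial σ R) (j : σ) :
    jacobianBracketAt u p q f (X j) = (jacobianMatrix (update u p f)).adjugate j q := by
  rw [jacobianBracketAt, det_jacobianMatrix_update]
  simp [pderiv_X, Pi.single_apply]

theorem jacobianBracketAt_eq_sum (f g : MvPolynomial σ R) :
    jacobianBracketAt u p q f g = ∑ j, jacobianBracketAt u p q f (X j) * pderiv j g := by
  rw [jacobianBracketAt, det_jacobianMatrix_update]
  exact Finset.sum_congr rfl fun j _ => by rw [jacobianBracketAt_X, mul_comm]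

theorem sum_pderiv_jacobianBracketAt_X (f : MvPolynomial σ R) :
    ∑ j, pderiv j (jacobianBracketAt u p q f (X j)) = 0 := by
  simp only [jacobianBracketAt_X]
  exact sum_pderiv_adjugate_jacobianMatrix _ _

theorem jacobianBracketAt_neg_right (f g : MvPolynomial σ R) :
    jacobianBracketAt u p q f (-g) = -jacobianBracketAt u p q f g := by
  rw [jacobianBracketAt_eq_sum f (-g), jacobianBracketAt_eq_sum f g, ← Finset.sum_neg_distrib]
  simp only [map_neg, mul_neg]

theorem jacobianBracketAt_swap (hpq : p ≠ q) (f g : MvPolynomial σ R) :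
    jacobianBracketAt u p q g f = -jacobianBracketAt u p q f g := by
  simp only [jacobianBracketAt, jacobianMatrix_update]
  exact Matrix.det_updateRow_updateRow_swap _ hpq _ _

theorem jacobianBracketAt_apply_of_ne {r : σ} (hrp : r ≠ p) (hrq : r ≠ q)
    (f : MvPolynomial σ R) : jacobianBracketAt u p q f (u r) = 0 := by
  refine Matrix.det_zero_of_row_eq hrq.symm ?_
  ext j
  simp [jacobianMatrix, update_of_ne hrp, update_of_ne hrq]

theorem jacobianBracketAt_leibniz (hpq : p ≠ q) (f g e : MvPolynomial σ R) :
    jacobianBracketAt u p q f (jacobianBracketAt u p q g e)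
      = jacobianBracketAt u p q (jacobianBracketAt u p q f g) e
        + jacobianBracketAt u p q g (jacobianBracketAt u p q f e) := by
  have key := sum_det_jacobianMatrix_update_derivation (update (update u p g) q e)
    fun j => jacobianBracketAt u p q f (X j)
  simp only [← jacobianBracketAt_eq_sum, sum_pderiv_jacobianBracketAt_X, mul_zero,
    add_zero] at key
  rw [Fintype.sum_eq_add p q hpq fun r ⟨hrp, hrq⟩ => ?_] at key
  · have hp : update (update (update u p g) q e) p
          (jacobianBracketAt u p q f (update (update u p g) q e p))
        = update (update u p (jacobianBracketAt u p q f g)) q e := by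
      rw [update_of_ne hpq, update_self, update_comm hpq.symm, update_idem]
    have hq : update (update (update u p g) q e) q
          (jacobianBracketAt u p q f (update (update u p g) q e q))
        = update (update u p g) q (jacobianBracketAt u p q f e) := by
      rw [update_self, update_idem]
    rw [hp, hq] at key
    exact key.symm
  · rw [update_of_ne hrq, update_of_ne hrp, jacobianBracketAt_apply_of_ne hrp hrq]
    simp [det_jacobianMatrix_update]

theorem jacobianBracketAt_jacobi (hpq : p ≠ q) (f g e : MvPolynomial σ R) :
    jacobianBracketAt u p q f (jacobianBracketAt u p q g e)
      + jacobianBracketAt u p q g (jacobianBracketAt u p q e f)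
      + jacobianBracketAt u p q e (jacobianBracketAt u p q f g) = 0 := by
  rw [jacobianBracketAt_leibniz hpq, jacobianBracketAt_swap hpq e f, jacobianBracketAt_neg_right,
    jacobianBracketAt_swap hpq e]
  ring

end MvPolynomial

theorem jacobianBracket_eq_jacobianBracketAt {k : Type*} [Field k] {n : ℕ} (hn : 2 ≤ n)
    (hs : Fin n → MvPolynomial (Fin n) k) (f g : MvPolynomial (Fin n) k) :
    jacobianBracket n hs f g = jacobianBracketAt hs ⟨0, by omega⟩ ⟨1, by omega⟩ f g := by
  unfold jacobianBracket jacobianBracketAt jacobianMatrix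
  congr 1
  ext i j
  rcases i with ⟨_ | _ | i, hi⟩ <;> simp [update_apply]

theorem jacobian_poisson_structure_is_unimodular_general
    {k : Type*} [Field k] (n : ℕ) (hn : 2 ≤ n)
    (hs : Fin n → MvPolynomial (Fin n) k)
    (br : MvPolynomial (Fin n) k → MvPolynomial (Fin n) k → MvPolynomial (Fin n) k)
    (hbr : ∀ f g, br f g = jacobianBracket n hs f g) :
    (∀ f g e, br f (br g e) + br g (br e f) + br e (br f g) = 0) ∧
    (∀ f, ∑ j : Fin n, pderiv j (br f (X j)) = 0) := by
  obtain rfl : br = jacobianBracketAt hs ⟨0, by omega⟩ ⟨1, by omega⟩ :=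
    funext₂ fun f g => (hbr f g).trans (jacobianBracket_eq_jacobianBracketAt hn hs f g)
  exact ⟨jacobianBracketAt_jacobi (by simp), sum_pderiv_jacobianBracketAt_X⟩

/-- the Jacobian bracket on k[x_1,…,x_n] is a Poisson structure
(Jacobi identity holds) and it is unimodular: its modular derivation
φ(f) = Σ_j ∂{f,x_j}/∂x_j vanishes identically. -/
theorem jacobian_poisson_structure_is_unimodular
    {k : Type*} [Field k] [CharZero k] (n : ℕ) (hn : 2 ≤ n)
    (hs : Fin n → MvPolynomial (Fin n) k)
    (br : MvPolynomial (Fin n) k → MvPolynomial (Fin n) k → MvPolynomial (Fin n) k)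
    (hbr : ∀ f g, br f g = jacobianBracket n hs f g) :
    (∀ f g e, br f (br g e) + br g (br e f) + br e (br f g) = 0) ∧
    (∀ f, ∑ j : Fin n, pderiv j (br f (X j)) = 0) :=
  jacobian_poisson_structure_is_unimodular_general n hn hs br hbr
end

section
/- Let R = k[x,y,z] (char k = 0). The set {g ∈ R : ∂g/∂z = 0 and ∂g/∂x + y·∂g/∂y = 0} equals the set of constants k·1. (This computes PH_3(R, R_t) ≅ k for the Poisson structure {x,y}=0, {y,z}=y, {z,x}=−1 with R_t the module twisted by the modular derivation.) -/
/-!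
Comparing the coefficients of `x^a y^b z^c` in `∂g/∂x + y ∂g/∂y = 0` gives the recursion
`(a + 1) g_{a+1,b,c} + b g_{a,b,c} = 0`. For `b ≠ 0` a nonzero coefficient would propagate to
all `g_{a+n,b,c}`, contradicting finiteness of the support; so `y` does not occur in `g`, and then
the recursion with `b = 0` kills every coefficient with `a ≠ 0`. Likewise `∂g/∂z = 0` removes `z`.
Characteristic zero is what makes the integer factors `a + 1` and `b` cancellable.
-/

open MvPolynomial

namespace MvPolynomial

variable {R σ : Type*}

section CommSemiring

variable [CommSemiring R] {p : MvPolynomial σ R}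

theorem notMem_vars_iff_forall_coeff_eq_zero {i : σ} :
    i ∉ p.vars ↔ ∀ m : σ →₀ ℕ, m i ≠ 0 → coeff m p = 0 := by
  classical
  simp only [mem_vars_iff_mem_support, mem_support_iff, Finsupp.mem_support_iff]
  grind

theorem coeff_X_mul_pderiv (j : σ) (m : σ →₀ ℕ) :
    coeff m (X j * pderiv j p) = m j * coeff m p := by
  classical
  rw [coeff_X_mul']
  by_cases hj : m j = 0
  · simp [hj]
  · have hle : 1 ≤ m j := Nat.one_le_iff_ne_zero.mpr hj
    rw [if_pos (Finsupp.mem_support_iff.mpr hj), coeff_pderiv,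
      tsub_add_cancel_of_le (Finsupp.single_le_iff.mpr hle), Finsupp.tsub_apply,
      Finsupp.single_eq_same, ← Nat.cast_add_one, Nat.sub_add_cancel hle, mul_comm]

theorem coeff_pderiv_add_X_mul_pderiv (i j : σ) (m : σ →₀ ℕ) :
    coeff m (pderiv i p + X j * pderiv j p) =
      coeff (m + Finsupp.single i 1) p * (m i + 1) + m j * coeff m p := by
  rw [coeff_add, coeff_pderiv, coeff_X_mul_pderiv]

end CommSemiring

section CharZero

variable [CommSemiring R] [NoZeroDivisors R] [CharZero R] {p : MvPolynomial σ R} {i j : σ}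

theorem notMem_vars_of_pderiv_eq_zero (h : pderiv i p = 0) : i ∉ p.vars := by
  refine notMem_vars_iff_forall_coeff_eq_zero.mpr fun m hm => ?_
  have hcoeff := congr(coeff (m - Finsupp.single i 1) $h)
  rw [coeff_pderiv, coeff_zero,
    tsub_add_cancel_of_le (Finsupp.single_le_iff.mpr (Nat.one_le_iff_ne_zero.mpr hm))] at hcoeff
  exact (mul_eq_zero.mp hcoeff).resolve_right (Nat.cast_add_one_ne_zero _)

theorem notMem_vars_right_of_pderiv_add_X_mul_pderiv_eq_zero (hij : i ≠ j)
    (h : pderiv i p + X j * pderiv j p = 0) : j ∉ p.vars := by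
  refine notMem_vars_iff_forall_coeff_eq_zero.mpr fun m hm => ?_
  by_contra hcoeff
  have hshift : ∀ n, coeff (m + Finsupp.single i n) p ≠ 0 := by
    intro n
    induction n with
    | zero => simpa using hcoeff
    | succ n ih =>
      have hrec := congr(coeff (m + Finsupp.single i n) $h)
      rw [coeff_pderiv_add_X_mul_pderiv, coeff_zero, add_assoc, ← Finsupp.single_add] at hrec
      simp only [Finsupp.add_apply, Finsupp.single_eq_of_ne' hij, add_zero] at hrec
      intro hzero
      rw [hzero, zero_mul, zero_add] at hrec
      exact mul_ne_zero (Nat.cast_ne_zero.mpr hm) ih hrec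
  exact Set.infinite_of_injective_forall_mem
    ((add_right_injective m).comp (Finsupp.single_injective i))
    (fun n => mem_support_iff.mpr (hshift n)) p.support.finite_toSet

theorem notMem_vars_left_of_pderiv_add_X_mul_pderiv_eq_zero (hij : i ≠ j)
    (h : pderiv i p + X j * pderiv j p = 0) : i ∉ p.vars := by
  have hj := notMem_vars_iff_forall_coeff_eq_zero.mp
    (notMem_vars_right_of_pderiv_add_X_mul_pderiv_eq_zero hij h)
  refine notMem_vars_iff_forall_coeff_eq_zero.mpr fun m hm => ?_
  by_cases hmj : m j = 0
  · have hrec := congr(coeff (m - Finsupp.single i 1) $h)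
    rw [coeff_pderiv_add_X_mul_pderiv, coeff_zero,
      tsub_add_cancel_of_le (Finsupp.single_le_iff.mpr (Nat.one_le_iff_ne_zero.mpr hm))] at hrec
    simp only [Finsupp.tsub_apply, Finsupp.single_eq_of_ne' hij, hmj] at hrec
    simpa [Nat.cast_add_one_ne_zero] using hrec
  · exact hj m hmj

end CharZero

end MvPolynomial

/-- On R = k[x,y,z], the set {g : ∂g/∂z = 0 and ∂g/∂x + y·∂g/∂y = 0}
is exactly the set of constants; this computes PH_3(R,R_t) ≅ k for the Poisson
structure {x,y}=0, {y,z}=y, {z,x}=−1 twisted by the modular derivation. -/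
theorem third_twisted_poisson_homology_is_constants
    {k : Type*} [Field k] [CharZero k] :
    {g : MvPolynomial (Fin 3) k |
        pderiv 2 g = 0 ∧ pderiv 0 g + X 1 * pderiv 1 g = 0}
      = Set.range (C : k → MvPolynomial (Fin 3) k) := by
  ext g
  constructor
  · rintro ⟨hdz, hdxy⟩
    have hx := notMem_vars_left_of_pderiv_add_X_mul_pderiv_eq_zero (by decide) hdxy
    have hy := notMem_vars_right_of_pderiv_add_X_mul_pderiv_eq_zero (by decide) hdxy
    have hz := notMem_vars_of_pderiv_eq_zero hdz
    refine ⟨coeff 0 g, (vars_eq_empty_iff_eq_C.mp ?_).symm⟩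
    refine Finset.eq_empty_of_forall_notMem fun i => ?_
    fin_cases i <;> assumption
  · rintro ⟨c, rfl⟩
    simp
end
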